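/- For every concurrent game structure G with a safe set F ⊆ S of states, there exists a memoryless strategy σ₁ for player 1 such that for all states s ∈ S, inf over all player-2 strategies σ₂ of Pr_s^{σ₁,σ₂}(Safe(F)) equals ⟨1⟩val(Safe(F))(s); that is, memoryless optimal strategies exist for concurrent safety games. -/
import Mathlib


open scoped Classical

/-- A (two-player) concurrent game structure: a finite state space `S`, a finite
set `M` of moves, move assignments `Γ₁ Γ₂ : S → Finset M`, and a probabilistic
transition function `δ`. -/
structure CGame (S : Type) (M : Type) where
  Γ₁ : S → Finset M
  Γ₂ : S → Finset M
  δ : S → M → M → S → ℝ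

namespace CGame

variable {S M : Type} [Fintype S] [DecidableEq S] [Fintype M] [DecidableEq M]

/-- Well-formedness of a concurrent game structure: move sets are nonempty and
`δ s a b` is a probability distribution over states. -/
def IsGame (G : CGame S M) : Prop :=
  (∀ s, (G.Γ₁ s).Nonempty) ∧ (∀ s, (G.Γ₂ s).Nonempty) ∧
    (∀ s a b t, 0 ≤ G.δ s a b t) ∧ (∀ s a b, (∑ t, G.δ s a b t) = 1)

/-- `x : M → ℝ` is a probability distribution supported on `A`. -/
def IsDistOn (A : Finset M) (x : M → ℝ) : Prop :=
  (∀ a, 0 ≤ x a) ∧ (∀ a, x a ≠ 0 → a ∈ A) ∧ (∑ a, x a) = 1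

/-- A selector for player 1. -/
def IsSel1 (G : CGame S M) (ξ : S → M → ℝ) : Prop := ∀ s, IsDistOn (G.Γ₁ s) (ξ s)

/-- A selector for player 2. -/
def IsSel2 (G : CGame S M) (ξ : S → M → ℝ) : Prop := ∀ s, IsDistOn (G.Γ₂ s) (ξ s)

/-- A strategy for player 1: maps a history (past states `w` and current state `s`)
to a distribution over the moves available at `s`. -/
def IsStrat1 (G : CGame S M) (σ : List S → S → M → ℝ) : Prop :=
  ∀ w s, IsDistOn (G.Γ₁ s) (σ w s)

/-- A strategy for player 2. -/
def IsStrat2 (G : CGame S M) (σ : List S → S → M → ℝ) : Prop :=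
  ∀ w s, IsDistOn (G.Γ₂ s) (σ w s)

/-- The memoryless strategy induced by a selector. -/
def ml (ξ : S → M → ℝ) : List S → S → M → ℝ := fun _ s => ξ s

/-- The pure (Dirac) distribution on a move `b`. -/
def pureDist (b : M) : M → ℝ := fun b' => if b' = b then 1 else 0

/-- The player-1 selector choosing all available moves uniformly at random. -/
noncomputable def uniformSel (G : CGame S M) : S → M → ℝ :=
  fun s a => if a ∈ G.Γ₁ s then (1 : ℝ) / (G.Γ₁ s).card else 0

/-- Probability of reaching `T` within `n` steps, starting from history `w`
and current state `s`, under strategies `σ₁, σ₂`. -/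
noncomputable def reachW (G : CGame S M) (σ₁ σ₂ : List S → S → M → ℝ) (T : Set S) :
    ℕ → List S → S → ℝ
  | 0, _, s => if s ∈ T then 1 else 0
  | n + 1, w, s =>
      if s ∈ T then 1
      else ∑ a : M, ∑ b : M, ∑ t : S,
        σ₁ w s a * σ₂ w s b * G.δ s a b t * reachW G σ₁ σ₂ T n (w ++ [s]) t

/-- Probability of staying in `F` for `n` steps, starting from history `w`
and current state `s`, under strategies `σ₁, σ₂`. -/
noncomputable def safeW (G : CGame S M) (σ₁ σ₂ : List S → S → M → ℝ) (F : Set S) :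
    ℕ → List S → S → ℝ
  | 0, _, s => if s ∈ F then 1 else 0
  | n + 1, w, s =>
      if s ∈ F then
        ∑ a : M, ∑ b : M, ∑ t : S,
          σ₁ w s a * σ₂ w s b * G.δ s a b t * safeW G σ₁ σ₂ F n (w ++ [s]) t
      else 0

/-- `Pr_s^{σ₁,σ₂}(Reach T)`: probability of eventually reaching `T` from `s`. -/
noncomputable def prReach (G : CGame S M) (σ₁ σ₂ : List S → S → M → ℝ) (T : Set S)
    (s : S) : ℝ :=
  ⨆ n : ℕ, reachW G σ₁ σ₂ T n [] s

/-- `Pr_s^{σ₁,σ₂}(Safe F)`: probability that the play stays in `F` forever. -/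
noncomputable def prSafe (G : CGame S M) (σ₁ σ₂ : List S → S → M → ℝ) (F : Set S)
    (s : S) : ℝ :=
  ⨅ n : ℕ, safeW G σ₁ σ₂ F n [] s

/-- `⟨1⟩val^{σ₁}(Reach T)(s) = inf_{σ₂} Pr_s^{σ₁,σ₂}(Reach T)`. -/
noncomputable def valReachUnder (G : CGame S M) (σ₁ : List S → S → M → ℝ) (T : Set S)
    (s : S) : ℝ :=
  ⨅ σ₂ : {σ // IsStrat2 G σ}, prReach G σ₁ σ₂.1 T s

/-- `⟨1⟩val(Reach T)(s) = sup_{σ₁} inf_{σ₂} Pr_s^{σ₁,σ₂}(Reach T)`. -/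
noncomputable def valReach (G : CGame S M) (T : Set S) (s : S) : ℝ :=
  ⨆ σ₁ : {σ // IsStrat1 G σ}, valReachUnder G σ₁.1 T s

/-- `⟨1⟩val^{σ₁}(Safe F)(s) = inf_{σ₂} Pr_s^{σ₁,σ₂}(Safe F)`. -/
noncomputable def valSafeUnder (G : CGame S M) (σ₁ : List S → S → M → ℝ) (F : Set S)
    (s : S) : ℝ :=
  ⨅ σ₂ : {σ // IsStrat2 G σ}, prSafe G σ₁ σ₂.1 F s

/-- `⟨1⟩val(Safe F)(s) = sup_{σ₁} inf_{σ₂} Pr_s^{σ₁,σ₂}(Safe F)`. -/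
noncomputable def valSafe (G : CGame S M) (F : Set S) (s : S) : ℝ :=
  ⨆ σ₁ : {σ // IsStrat1 G σ}, valSafeUnder G σ₁.1 F s

/-- `W₂ = {s | ⟨1⟩val(Reach T)(s) = 0}`. -/
noncomputable def W2 (G : CGame S M) (T : Set S) : Set S := {s | valReach G T s = 0}

/-- `W₁ = {s | ⟨1⟩val(Safe F)(s) = 1}`. -/
noncomputable def W1 (G : CGame S M) (F : Set S) : Set S := {s | valSafe G F s = 1}

/-- A state is absorbing if for all moves the successor is the state itself. -/
def Absorbing (G : CGame S M) (s : S) : Prop := ∀ a b, G.δ s a b s = 1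

/-- A player-1 strategy is proper if against every player-2 strategy, from every
state the set `T ∪ W₂` is reached with probability 1. -/
noncomputable def Proper (G : CGame S M) (T : Set S) (σ₁ : List S → S → M → ℝ) : Prop :=
  ∀ σ₂, IsStrat2 G σ₂ → ∀ s, prReach G σ₁ σ₂ (T ∪ W2 G T) s = 1

/-- `Pre_{ξ₁,ξ₂}(v)(s)`: one-step expectation of `v` at `s` when the players use the
one-state selectors `x, y`. -/
noncomputable def preSS (G : CGame S M) (v : S → ℝ) (s : S) (x y : M → ℝ) : ℝ :=
  ∑ a : M, ∑ b : M, ∑ t : S, v t * G.δ s a b t * x a * y b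

/-- `Pre_{1:ξ₁}(v)(s) = inf_{ξ₂} Pre_{ξ₁,ξ₂}(v)(s)`. -/
noncomputable def pre1Sel (G : CGame S M) (v : S → ℝ) (s : S) (x : M → ℝ) : ℝ :=
  ⨅ y : {y : M → ℝ // IsDistOn (G.Γ₂ s) y}, preSS G v s x y.1

/-- `Pre₁(v)(s) = sup_{ξ₁} inf_{ξ₂} Pre_{ξ₁,ξ₂}(v)(s)`. -/
noncomputable def pre1 (G : CGame S M) (v : S → ℝ) (s : S) : ℝ :=
  ⨆ x : {x : M → ℝ // IsDistOn (G.Γ₁ s) x}, pre1Sel G v s x.1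

/-- The value-iteration sequence: `u 0 = [T]`, `u (k+1) = Pre₁ (u k)`. -/
noncomputable def valIter (G : CGame S M) (T : Set S) : ℕ → S → ℝ
  | 0 => fun s => if s ∈ T then 1 else 0
  | n + 1 => fun s => pre1 G (valIter G T n) s

/-- The entry time `ℓ_k(s) = min {j ≤ k | u_j(s) = u_k(s)}`. -/
noncomputable def entryTime (G : CGame S M) (T : Set S) (k : ℕ) (s : S) : ℕ :=
  sInf {j : ℕ | valIter G T j s = valIter G T k s}

/-- `dest(s,b)` under a player-1 selector `η`: possible successors of `s` when
player 1 plays `η` and player 2 plays `b`. -/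
def destSet (G : CGame S M) (η : S → M → ℝ) (s : S) (b : M) : Set S :=
  {t | ∃ a, η s a ≠ 0 ∧ G.δ s a b t ≠ 0}

/-- `OptSel(v,s)`: the set of optimal one-state player-1 selectors for `v` at `s`. -/
noncomputable def OptSel (G : CGame S M) (v : S → ℝ) (s : S) : Set (M → ℝ) :=
  {x | IsDistOn (G.Γ₁ s) x ∧ pre1Sel G v s x = pre1 G v s}

/-- `CountOpt(v,s,x)`: the set of counter-optimal player-2 moves against `x`. -/
noncomputable def countOpt (G : CGame S M) (v : S → ℝ) (s : S) (x : M → ℝ) : Finset M :=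
  (G.Γ₂ s).filter fun b => preSS G v s x (pureDist b) = pre1 G v s

/-- The support of a one-state selector, as a `Finset`. -/
noncomputable def fsupp (x : M → ℝ) : Finset M := Finset.univ.filter fun a => x a ≠ 0

/-- `OptSelCount(v,s)`: pairs `(A,B)` such that some optimal selector has support `A`
and counter-optimal action set `B`. -/
noncomputable def optSelCount (G : CGame S M) (v : S → ℝ) (s : S) :
    Set (Finset M × Finset M) :=
  {p | ∃ x ∈ OptSel G v s, fsupp x = p.1 ∧ countOpt G v s x = p.2}

/-- A selector is `k`-uniform if every probability it assigns is of the form `i/j`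
with `0 ≤ i ≤ j ≤ k`. -/
def KUniform (k : ℕ) (ξ : S → M → ℝ) : Prop :=
  ∀ s a, ∃ i j : ℕ, i ≤ j ∧ j ≤ k ∧ ξ s a = (i : ℝ) / (j : ℝ)

end CGame

section Dev
set_option linter.unusedSectionVars false
namespace CGame

variable {S M : Type} [Fintype S] [DecidableEq S] [Fintype M] [DecidableEq M]

/-- uniform distribution on a nonempty finset is a distribution -/
lemma isDistOn_uniform (A : Finset M) (hA : A.Nonempty) :
    IsDistOn A (fun a => if a ∈ A then (1 : ℝ) / A.card else 0) := by
  have hc : (0 : ℝ) < A.card := by exact_mod_cast Finset.card_pos.2 hA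
  refine ⟨fun a => ?_, fun a h => ?_, ?_⟩
  · by_cases h : a ∈ A
    · simp only [h, if_true]; positivity
    · simp [h]
  · by_contra hm; simp [hm] at h
  · rw [Finset.sum_ite_mem, Finset.univ_inter, Finset.sum_const, nsmul_eq_mul]
    field_simp

noncomputable def unif2 (G : CGame S M) : S → M → ℝ :=
  fun s b => if b ∈ G.Γ₂ s then (1 : ℝ) / (G.Γ₂ s).card else 0

lemma isSel2_unif2 (G : CGame S M) (hG : G.IsGame) : IsSel2 G (unif2 G) :=
  fun s => isDistOn_uniform _ (hG.2.1 s)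

lemma isSel1_uniformSel (G : CGame S M) (hG : G.IsGame) : IsSel1 G (uniformSel G) :=
  fun s => isDistOn_uniform _ (hG.1 s)

lemma nonempty_strat2 (G : CGame S M) (hG : G.IsGame) : Nonempty {σ // IsStrat2 G σ} :=
  ⟨⟨ml (unif2 G), fun _ s => isSel2_unif2 G hG s⟩⟩

lemma nonempty_strat1 (G : CGame S M) (hG : G.IsGame) : Nonempty {σ // IsStrat1 G σ} :=
  ⟨⟨ml (uniformSel G), fun _ s => isSel1_uniformSel G hG s⟩⟩

lemma nonempty_dist2 (G : CGame S M) (hG : G.IsGame) (s : S) :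
    Nonempty {y : M → ℝ // IsDistOn (G.Γ₂ s) y} :=
  ⟨⟨unif2 G s, isSel2_unif2 G hG s⟩⟩

lemma nonempty_dist1 (G : CGame S M) (hG : G.IsGame) (s : S) :
    Nonempty {x : M → ℝ // IsDistOn (G.Γ₁ s) x} :=
  ⟨⟨uniformSel G s, isSel1_uniformSel G hG s⟩⟩

/-- pure distribution on `b ∈ B` is a distribution on `B` -/
lemma isDistOn_pureDist {B : Finset M} {b : M} (hb : b ∈ B) : IsDistOn B (pureDist b) := by
  refine ⟨fun a => ?_, fun a h => ?_, ?_⟩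
  · unfold pureDist; split <;> norm_num
  · unfold pureDist at h; by_contra hm
    rcases eq_or_ne a b with rfl | hne
    · exact hm hb
    · simp [hne] at h
  · simp [pureDist]

/-- the key three-fold sum with `f ≡ 1` -/
lemma sum_xyδ (G : CGame S M) (hG : G.IsGame) {s : S} {A B : Finset M} {x y : M → ℝ}
    (hx : IsDistOn A x) (hy : IsDistOn B y) :
    (∑ a : M, ∑ b : M, ∑ t : S, x a * y b * G.δ s a b t) = 1 := by
  have h1 : ∀ a b : M, (∑ t : S, x a * y b * G.δ s a b t) = x a * y b := by
    intro a b; rw [← Finset.mul_sum, hG.2.2.2 s a b, mul_one]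
  simp only [h1]
  rw [← Finset.sum_mul_sum, hx.2.2, hy.2.2, mul_one]

lemma sum3_nonneg (G : CGame S M) (hG : G.IsGame) {s : S} {x y : M → ℝ}
    (hx : ∀ a, 0 ≤ x a) (hy : ∀ b, 0 ≤ y b) {f : S → ℝ} (hf : ∀ t, 0 ≤ f t) :
    0 ≤ ∑ a : M, ∑ b : M, ∑ t : S, x a * y b * G.δ s a b t * f t := by
  refine Finset.sum_nonneg fun a _ => Finset.sum_nonneg fun b _ =>
    Finset.sum_nonneg fun t _ => ?_
  have h1 := hG.2.2.1 s a b t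
  have h2 := hx a; have h3 := hy b; have h4 := hf t
  positivity

lemma sum3_mono (G : CGame S M) (hG : G.IsGame) {s : S} {x y : M → ℝ}
    (hx : ∀ a, 0 ≤ x a) (hy : ∀ b, 0 ≤ y b) {f g : S → ℝ} (hfg : ∀ t, f t ≤ g t) :
    (∑ a : M, ∑ b : M, ∑ t : S, x a * y b * G.δ s a b t * f t)
      ≤ ∑ a : M, ∑ b : M, ∑ t : S, x a * y b * G.δ s a b t * g t := by
  refine Finset.sum_le_sum fun a _ => Finset.sum_le_sum fun b _ =>
    Finset.sum_le_sum fun t _ => ?_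
  have hδ := hG.2.2.1 s a b t
  have h2 := hx a; have h3 := hy b
  have : 0 ≤ x a * y b * G.δ s a b t := by positivity
  exact mul_le_mul_of_nonneg_left (hfg t) this

lemma sum3_le_one (G : CGame S M) (hG : G.IsGame) {s : S} {A B : Finset M} {x y : M → ℝ}
    (hx : IsDistOn A x) (hy : IsDistOn B y) {f : S → ℝ} (hf : ∀ t, f t ≤ 1) :
    (∑ a : M, ∑ b : M, ∑ t : S, x a * y b * G.δ s a b t * f t) ≤ 1 := by
  calc (∑ a : M, ∑ b : M, ∑ t : S, x a * y b * G.δ s a b t * f t)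
      ≤ ∑ a : M, ∑ b : M, ∑ t : S, x a * y b * G.δ s a b t * 1 :=
        sum3_mono G hG hx.1 hy.1 hf
    _ = 1 := by simp only [mul_one]; exact sum_xyδ G hG hx hy

variable {G : CGame S M} {σ₁ σ₂ : List S → S → M → ℝ} {F : Set S}

lemma safeW_nonneg (hG : G.IsGame) (h1 : IsStrat1 G σ₁) (h2 : IsStrat2 G σ₂) :
    ∀ n w s, 0 ≤ safeW G σ₁ σ₂ F n w s := by
  intro n
  induction n with
  | zero => intro w s; unfold safeW; split <;> norm_num
  | succ n ih =>
    intro w s; unfold safeW; split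
    · exact sum3_nonneg G hG (h1 w s).1 (h2 w s).1 fun t => ih (w ++ [s]) t
    · exact le_refl 0

lemma safeW_le_one (hG : G.IsGame) (h1 : IsStrat1 G σ₁) (h2 : IsStrat2 G σ₂) :
    ∀ n w s, safeW G σ₁ σ₂ F n w s ≤ 1 := by
  intro n
  induction n with
  | zero => intro w s; unfold safeW; split <;> norm_num
  | succ n ih =>
    intro w s; unfold safeW; split
    · exact sum3_le_one G hG (h1 w s) (h2 w s) fun t => ih (w ++ [s]) t
    · norm_num

lemma safeW_succ_le (hG : G.IsGame) (h1 : IsStrat1 G σ₁) (h2 : IsStrat2 G σ₂) :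
    ∀ n w s, safeW G σ₁ σ₂ F (n + 1) w s ≤ safeW G σ₁ σ₂ F n w s := by
  intro n
  induction n with
  | zero =>
    intro w s
    show safeW G σ₁ σ₂ F 1 w s ≤ safeW G σ₁ σ₂ F 0 w s
    unfold safeW; split
    · exact sum3_le_one G hG (h1 w s) (h2 w s) fun t =>
        safeW_le_one hG h1 h2 0 (w ++ [s]) t
    · exact le_refl 0
  | succ n ih =>
    intro w s
    show safeW G σ₁ σ₂ F (n + 1 + 1) w s ≤ safeW G σ₁ σ₂ F (n + 1) w s
    unfold safeW; split
    · exact sum3_mono G hG (h1 w s).1 (h2 w s).1 fun t => ih (w ++ [s]) t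
    · exact le_refl 0

lemma safeW_antitone (hG : G.IsGame) (h1 : IsStrat1 G σ₁) (h2 : IsStrat2 G σ₂)
    (w : List S) (s : S) : Antitone (fun n => safeW G σ₁ σ₂ F n w s) :=
  antitone_nat_of_succ_le fun n => safeW_succ_le hG h1 h2 n w s

lemma safeW_bddBelow (hG : G.IsGame) (h1 : IsStrat1 G σ₁) (h2 : IsStrat2 G σ₂)
    (w : List S) (s : S) : BddBelow (Set.range fun n => safeW G σ₁ σ₂ F n w s) :=
  ⟨0, by rintro r ⟨n, rfl⟩; exact safeW_nonneg hG h1 h2 n w s⟩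

lemma safeW_tendsto (hG : G.IsGame) (h1 : IsStrat1 G σ₁) (h2 : IsStrat2 G σ₂)
    (w : List S) (s : S) :
    Filter.Tendsto (fun n => safeW G σ₁ σ₂ F n w s) Filter.atTop
      (nhds (⨅ n, safeW G σ₁ σ₂ F n w s)) :=
  tendsto_atTop_ciInf (safeW_antitone hG h1 h2 w s) (safeW_bddBelow hG h1 h2 w s)

lemma safeW_of_not_mem (hs : s ∉ F) : ∀ n w, safeW G σ₁ σ₂ F n w s = 0 := by
  intro n w
  cases n with
  | zero => unfold safeW; simp [hs]
  | succ n => unfold safeW; simp [hs]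

lemma prSafe_nonneg (hG : G.IsGame) (h1 : IsStrat1 G σ₁) (h2 : IsStrat2 G σ₂) (s : S) :
    0 ≤ prSafe G σ₁ σ₂ F s :=
  le_ciInf fun n => safeW_nonneg hG h1 h2 n [] s

lemma prSafe_le_one (hG : G.IsGame) (h1 : IsStrat1 G σ₁) (h2 : IsStrat2 G σ₂) (s : S) :
    prSafe G σ₁ σ₂ F s ≤ 1 :=
  le_trans (ciInf_le (safeW_bddBelow hG h1 h2 [] s) 0) (safeW_le_one hG h1 h2 0 [] s)

lemma prSafe_of_not_mem (hs : s ∉ F) : prSafe G σ₁ σ₂ F s = 0 := by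
  unfold prSafe
  simp [safeW_of_not_mem hs]

lemma valSafeUnder_nonneg (hG : G.IsGame) (h1 : IsStrat1 G σ₁) (s : S) :
    0 ≤ valSafeUnder G σ₁ F s := by
  haveI := nonempty_strat2 G hG
  exact le_ciInf fun σ => prSafe_nonneg hG h1 σ.2 s

lemma valSafeUnder_bddBelow (hG : G.IsGame) (h1 : IsStrat1 G σ₁) (s : S) :
    BddBelow (Set.range fun σ₂ : {σ // IsStrat2 G σ} => prSafe G σ₁ σ₂.1 F s) :=
  ⟨0, by rintro r ⟨σ, rfl⟩; exact prSafe_nonneg hG h1 σ.2 s⟩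

lemma valSafeUnder_le_one (hG : G.IsGame) (h1 : IsStrat1 G σ₁) (s : S) :
    valSafeUnder G σ₁ F s ≤ 1 := by
  rcases nonempty_strat2 G hG with ⟨σ⟩
  exact le_trans (ciInf_le (valSafeUnder_bddBelow hG h1 s) σ) (prSafe_le_one hG h1 σ.2 s)

lemma valSafe_bddAbove (hG : G.IsGame) (s : S) :
    BddAbove (Set.range fun σ₁ : {σ // IsStrat1 G σ} => valSafeUnder G σ₁.1 F s) :=
  ⟨1, by rintro r ⟨σ, rfl⟩; exact valSafeUnder_le_one hG σ.2 s⟩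

lemma valSafe_nonneg (hG : G.IsGame) (s : S) : 0 ≤ valSafe G F s := by
  rcases nonempty_strat1 G hG with ⟨σ⟩
  exact le_trans (valSafeUnder_nonneg hG σ.2 s) (le_ciSup (valSafe_bddAbove hG s) σ)

lemma valSafe_le_one (hG : G.IsGame) (s : S) : valSafe G F s ≤ 1 := by
  haveI := nonempty_strat1 G hG
  exact ciSup_le fun σ => valSafeUnder_le_one hG σ.2 s

lemma valSafe_of_not_mem (hG : G.IsGame) (hs : s ∉ F) : valSafe G F s = 0 := by
  haveI := nonempty_strat1 G hG
  haveI := nonempty_strat2 G hG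
  unfold valSafe valSafeUnder
  have : ∀ σ₁ : {σ // IsStrat1 G σ},
      (⨅ σ₂ : {σ // IsStrat2 G σ}, prSafe G σ₁.1 σ₂.1 F s) = 0 := by
    intro σ₁
    have : ∀ σ₂ : {σ // IsStrat2 G σ}, prSafe G σ₁.1 σ₂.1 F s = 0 := fun σ₂ =>
      prSafe_of_not_mem hs
    simp only [this, ciInf_const]
  simp only [this, ciSup_const]

/-! ### Shifting strategies -/

def shiftStrat (σ : List S → S → M → ℝ) (w : List S) : List S → S → M → ℝ :=
  fun w' s => σ (w ++ w') s

lemma isStrat1_shift (h : IsStrat1 G σ₁) (w : List S) : IsStrat1 G (shiftStrat σ₁ w) :=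
  fun w' s => h (w ++ w') s

lemma isStrat2_shift (h : IsStrat2 G σ₂) (w : List S) : IsStrat2 G (shiftStrat σ₂ w) :=
  fun w' s => h (w ++ w') s

lemma safeW_shift (w : List S) :
    ∀ n w' s, safeW G σ₁ σ₂ F n (w ++ w') s
      = safeW G (shiftStrat σ₁ w) (shiftStrat σ₂ w) F n w' s := by
  intro n
  induction n with
  | zero => intro w' s; rfl
  | succ n ih =>
    intro w' s
    show (if s ∈ F then ∑ a : M, ∑ b : M, ∑ t : S,
        σ₁ (w ++ w') s a * σ₂ (w ++ w') s b * G.δ s a b t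
          * safeW G σ₁ σ₂ F n ((w ++ w') ++ [s]) t else 0) = _
    rw [show (w ++ w') ++ [s] = w ++ (w' ++ [s]) by rw [List.append_assoc]]
    simp only [ih (w' ++ [s])]
    rfl

/-! ### preSS and pre1Sel -/

variable {v : S → ℝ} {s : S} {x y : M → ℝ}

/-- the value of `preSS` against a pure player-2 move -/
noncomputable def gfun (G : CGame S M) (v : S → ℝ) (s : S) (x : M → ℝ) (b : M) : ℝ :=
  ∑ a : M, ∑ t : S, v t * G.δ s a b t * x a

lemma preSS_pure (b : M) : preSS G v s x (pureDist b) = gfun G v s x b := by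
  unfold preSS gfun pureDist
  refine Finset.sum_congr rfl fun a _ => ?_
  rw [Finset.sum_comm]
  refine Finset.sum_congr rfl fun t _ => ?_
  simp [mul_ite]

lemma preSS_convex : preSS G v s x y = ∑ b : M, y b * gfun G v s x b := by
  unfold preSS gfun
  rw [Finset.sum_comm]
  simp only [Finset.mul_sum]
  exact Finset.sum_congr rfl fun b _ => Finset.sum_congr rfl fun a _ =>
    Finset.sum_congr rfl fun t _ => by ring

lemma inf'_le_convex {B : Finset M} (hB : B.Nonempty) (g : M → ℝ)
    (hy : IsDistOn B y) : B.inf' hB g ≤ ∑ b : M, y b * g b := by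
  have h0 : B.inf' hB g = ∑ b : M, y b * B.inf' hB g := by
    rw [← Finset.sum_mul, hy.2.2, one_mul]
  rw [h0]
  refine Finset.sum_le_sum fun b _ => ?_
  rcases eq_or_ne (y b) 0 with h | h
  · simp [h]
  · exact mul_le_mul_of_nonneg_left (Finset.inf'_le g (hy.2.1 b h)) (hy.1 b)

lemma inf'_le_preSS (hG : G.IsGame) (hy : IsDistOn (G.Γ₂ s) y) :
    (G.Γ₂ s).inf' (hG.2.1 s) (gfun G v s x) ≤ preSS G v s x y := by
  rw [preSS_convex]; exact inf'_le_convex _ _ hy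

lemma pre1Sel_eq_inf' (hG : G.IsGame) :
    pre1Sel G v s x = (G.Γ₂ s).inf' (hG.2.1 s) (gfun G v s x) := by
  haveI := nonempty_dist2 G hG s
  refine le_antisymm ?_ (le_ciInf fun y => inf'_le_preSS hG y.2)
  obtain ⟨b, hb, hbe⟩ := Finset.exists_mem_eq_inf' (hG.2.1 s) (gfun G v s x)
  rw [hbe]
  have := ciInf_le (f := fun y : {y : M → ℝ // IsDistOn (G.Γ₂ s) y} => preSS G v s x y.1)
    ⟨(G.Γ₂ s).inf' (hG.2.1 s) (gfun G v s x), by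
      rintro r ⟨y, rfl⟩; exact inf'_le_preSS hG y.2⟩ ⟨pureDist b, isDistOn_pureDist hb⟩
  rwa [preSS_pure] at this

lemma pre1Sel_le_preSS (hG : G.IsGame) (hy : IsDistOn (G.Γ₂ s) y) :
    pre1Sel G v s x ≤ preSS G v s x y := by
  rw [pre1Sel_eq_inf' hG]; exact inf'_le_preSS hG hy

lemma gfun_nonneg (hG : G.IsGame) (hv0 : ∀ t, 0 ≤ v t) (hx : ∀ a, 0 ≤ x a) (b : M) :
    0 ≤ gfun G v s x b := by
  refine Finset.sum_nonneg fun a _ => Finset.sum_nonneg fun t _ => ?_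
  have h1 := hG.2.2.1 s a b t; have h2 := hv0 t; have h3 := hx a
  positivity

lemma gfun_le_one (hG : G.IsGame) (hv1 : ∀ t, v t ≤ 1) (hv0 : ∀ t, 0 ≤ v t)
    {A : Finset M} (hx : IsDistOn A x) (b : M) : gfun G v s x b ≤ 1 := by
  calc gfun G v s x b ≤ ∑ a : M, ∑ t : S, 1 * G.δ s a b t * x a := by
        refine Finset.sum_le_sum fun a _ => Finset.sum_le_sum fun t _ => ?_
        have h1 := hG.2.2.1 s a b t; have h3 := hx.1 a
        exact mul_le_mul_of_nonneg_right
          (mul_le_mul_of_nonneg_right (hv1 t) h1) h3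
    _ = ∑ a : M, x a * (∑ t : S, G.δ s a b t) := by
        refine Finset.sum_congr rfl fun a _ => ?_
        rw [Finset.mul_sum]
        exact Finset.sum_congr rfl fun t _ => by ring
    _ = 1 := by
        simp only [hG.2.2.2 s _ b, mul_one, hx.2.2]

lemma pre1Sel_nonneg (hG : G.IsGame) (hv0 : ∀ t, 0 ≤ v t) (hx : ∀ a, 0 ≤ x a) :
    0 ≤ pre1Sel G v s x := by
  rw [pre1Sel_eq_inf' hG]
  exact Finset.le_inf' _ _ fun b _ => gfun_nonneg hG hv0 hx b

lemma pre1Sel_le_one (hG : G.IsGame) (hv0 : ∀ t, 0 ≤ v t) (hv1 : ∀ t, v t ≤ 1)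
    {A : Finset M} (hx : IsDistOn A x) : pre1Sel G v s x ≤ 1 := by
  rw [pre1Sel_eq_inf' hG]
  obtain ⟨b, hb, hbe⟩ := Finset.exists_mem_eq_inf' (hG.2.1 s) (gfun G v s x)
  rw [hbe]; exact gfun_le_one hG hv1 hv0 hx b

lemma pre1_bddAbove (hG : G.IsGame) (hv0 : ∀ t, 0 ≤ v t) (hv1 : ∀ t, v t ≤ 1) :
    BddAbove (Set.range fun x : {x : M → ℝ // IsDistOn (G.Γ₁ s) x} => pre1Sel G v s x.1) :=
  ⟨1, by rintro r ⟨x, rfl⟩; exact pre1Sel_le_one hG hv0 hv1 x.2⟩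

lemma pre1Sel_le_pre1 (hG : G.IsGame) (hv0 : ∀ t, 0 ≤ v t) (hv1 : ∀ t, v t ≤ 1)
    (hx : IsDistOn (G.Γ₁ s) x) : pre1Sel G v s x ≤ pre1 G v s :=
  le_ciSup (pre1_bddAbove hG hv0 hv1) (⟨x, hx⟩ : {x : M → ℝ // IsDistOn (G.Γ₁ s) x})

/-! ### compactness: pre1 is attained -/

lemma isCompact_distOn (A : Finset M) : IsCompact {x : M → ℝ | IsDistOn A x} := by
  have hsub : {x : M → ℝ | IsDistOn A x} ⊆ Set.univ.pi fun _ : M => Set.Icc (0 : ℝ) 1 := by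
    intro x hx a _
    refine ⟨hx.1 a, ?_⟩
    calc x a ≤ ∑ a : M, x a :=
          Finset.single_le_sum (fun i _ => hx.1 i) (Finset.mem_univ a)
      _ = 1 := hx.2.2
  have hcl : IsClosed {x : M → ℝ | IsDistOn A x} := by
    have he : {x : M → ℝ | IsDistOn A x}
        = (⋂ a : M, {x : M → ℝ | 0 ≤ x a})
          ∩ ((⋂ a : M, {x : M → ℝ | x a ≠ 0 → a ∈ A})
          ∩ {x : M → ℝ | (∑ a : M, x a) = 1}) := by
      ext x
      simp only [Set.mem_setOf_eq, Set.mem_inter_iff, Set.mem_iInter, IsDistOn]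
    rw [he]
    refine IsClosed.inter (isClosed_iInter fun a =>
        isClosed_le continuous_const (continuous_apply a))
      (IsClosed.inter (isClosed_iInter fun a => ?_)
        (isClosed_eq (continuous_finset_sum _ fun a _ => continuous_apply a)
          continuous_const))
    by_cases ha : a ∈ A
    · have : {x : M → ℝ | x a ≠ 0 → a ∈ A} = Set.univ := by
        ext x; simp [ha]
      rw [this]; exact isClosed_univ
    · have : {x : M → ℝ | x a ≠ 0 → a ∈ A} = {x : M → ℝ | x a = 0} := by
        ext x; simp only [Set.mem_setOf_eq]
        constructor
        · intro h; by_contra h0; exact ha (h h0)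
        · intro h h0; exact absurd h h0
      rw [this]; exact isClosed_eq (continuous_apply a) continuous_const
  exact (isCompact_univ_pi fun _ => isCompact_Icc).of_isClosed_subset hcl hsub

lemma continuous_gfun_inf (hG : G.IsGame) (v : S → ℝ) (s : S) :
    Continuous fun x : M → ℝ => (G.Γ₂ s).inf' (hG.2.1 s) (gfun G v s x) := by
  have : ∀ b ∈ G.Γ₂ s, Continuous fun x : M → ℝ => gfun G v s x b := by
    intro b _
    exact continuous_finset_sum _ fun a _ => continuous_finset_sum _ fun t _ =>
      continuous_const.mul (continuous_apply a)
  exact Continuous.finset_inf'_apply (hG.2.1 s) this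

lemma pre1_attained (hG : G.IsGame) (hv0 : ∀ t, 0 ≤ v t) (hv1 : ∀ t, v t ≤ 1) (s : S) :
    ∃ x : M → ℝ, IsDistOn (G.Γ₁ s) x ∧ pre1Sel G v s x = pre1 G v s := by
  haveI := nonempty_dist1 G hG s
  obtain ⟨x₀, hx₀, hmax⟩ := (isCompact_distOn (M := M) (G.Γ₁ s)).exists_isMaxOn
    ⟨uniformSel G s, isSel1_uniformSel G hG s⟩
    (continuous_gfun_inf hG v s).continuousOn
  refine ⟨x₀, hx₀, le_antisymm (pre1Sel_le_pre1 hG hv0 hv1 hx₀) ?_⟩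
  refine ciSup_le fun x => ?_
  rw [pre1Sel_eq_inf' hG, pre1Sel_eq_inf' hG]
  exact hmax x.2

lemma preSS_reorder :
    preSS G v s x y = ∑ a : M, ∑ b : M, ∑ t : S, x a * y b * G.δ s a b t * v t := by
  unfold preSS
  exact Finset.sum_congr rfl fun a _ => Finset.sum_congr rfl fun b _ =>
    Finset.sum_congr rfl fun t _ => by ring

lemma sum3_add_const (hG : G.IsGame) {A B : Finset M} (hx : IsDistOn A x)
    (hy : IsDistOn B y) (f : S → ℝ) (c : ℝ) :
    (∑ a : M, ∑ b : M, ∑ t : S, x a * y b * G.δ s a b t * (f t + c))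
      = (∑ a : M, ∑ b : M, ∑ t : S, x a * y b * G.δ s a b t * f t) + c := by
  simp only [mul_add, Finset.sum_add_distrib]
  congr 1
  simp only [← Finset.sum_mul]
  rw [sum_xyδ G hG hx hy, one_mul]

lemma head?_append_append {α : Type*} {l : List α} {a c t : α}
    (h : (l ++ [a]).head? = some t) : ((l ++ [a]) ++ [c]).head? = some t := by
  cases l <;> simpa using h

/-- The value of the safety game is a sub-fixed point of `pre1`. -/
lemma valSafe_le_pre1 (hG : G.IsGame) (F : Set S) (s : S) :
    valSafe G F s ≤ pre1 G (valSafe G F) s := by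
  haveI := nonempty_strat1 G hG
  haveI := nonempty_strat2 G hG
  set v : S → ℝ := valSafe G F with hv
  have hv0 : ∀ t, 0 ≤ v t := fun t => valSafe_nonneg hG t
  have hv1 : ∀ t, v t ≤ 1 := fun t => valSafe_le_one hG t
  refine ciSup_le fun σ₁ => ?_
  set x : M → ℝ := σ₁.1 [] s with hxdef
  have hx : IsDistOn (G.Γ₁ s) x := σ₁.2 [] s
  refine le_trans ?_ (pre1Sel_le_pre1 hG hv0 hv1 hx)
  rw [pre1Sel_eq_inf' hG]
  refine Finset.le_inf' _ _ fun b hb => ?_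
  -- goal : valSafeUnder G σ₁.1 F s ≤ gfun G v s x b
  by_cases hsF : s ∈ F
  swap
  · refine le_trans ?_ (gfun_nonneg hG hv0 hx.1 b)
    obtain ⟨σ₂⟩ := nonempty_strat2 G hG
    have h2 : valSafeUnder G σ₁.1 F s ≤ prSafe G σ₁.1 σ₂.1 F s :=
      ciInf_le (valSafeUnder_bddBelow (F := F) hG σ₁.2 s) σ₂
    exact le_trans h2 (le_of_eq (prSafe_of_not_mem hsF))
  refine le_of_forall_pos_le_add fun ε hε => ?_
  -- choose ε-optimal player-2 replies after one step
  have hshift : IsStrat1 G (shiftStrat σ₁.1 [s]) := isStrat1_shift σ₁.2 [s]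
  have hlt : ∀ t : S, (⨅ σ₂ : {σ // IsStrat2 G σ},
      prSafe G (shiftStrat σ₁.1 [s]) σ₂.1 F t) < v t + ε := by
    intro t
    have h1 : valSafeUnder G (shiftStrat σ₁.1 [s]) F t ≤ v t :=
      le_ciSup (valSafe_bddAbove hG t)
        (⟨shiftStrat σ₁.1 [s], hshift⟩ : {σ // IsStrat1 G σ})
    exact lt_of_le_of_lt h1 (lt_add_of_pos_right _ hε)
  choose τ hτ using fun t : S => exists_lt_of_ciInf_lt (hlt t)
  -- the combined player-2 strategy
  set σ₂ : List S → S → M → ℝ := fun w t' =>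
    match w with
    | [] => if t' = s then pureDist b else unif2 G t'
    | [_] => (τ t').1 [] t'
    | _ :: t :: w'' => (τ t).1 (t :: w'') t' with hσ₂def
  have hσ₂ : IsStrat2 G σ₂ := by
    intro w t'
    match w with
    | [] =>
      show IsDistOn (G.Γ₂ t') (if t' = s then pureDist b else unif2 G t')
      split
      · next h => subst h; exact isDistOn_pureDist hb
      · exact isSel2_unif2 G hG t'
    | [_] => exact (τ t').2 [] t'
    | _ :: t :: w'' => exact (τ t).2 (t :: w'') t'
  -- the key claim: after the first step, play follows (τ t)
  have claim : ∀ n (t : S) (w' : List S) (t' : S), (w' ++ [t']).head? = some t →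
      safeW G σ₁.1 σ₂ F n (s :: w') t'
        = safeW G (shiftStrat σ₁.1 [s]) (τ t).1 F n w' t' := by
    intro n
    induction n with
    | zero => intro t w' t' _; rfl
    | succ n ih =>
      intro t w' t' hh
      show (if t' ∈ F then ∑ a : M, ∑ b' : M, ∑ u : S,
          σ₁.1 (s :: w') t' a * σ₂ (s :: w') t' b' * G.δ t' a b' u
            * safeW G σ₁.1 σ₂ F n ((s :: w') ++ [t']) u else 0)
        = (if t' ∈ F then ∑ a : M, ∑ b' : M, ∑ u : S,
          shiftStrat σ₁.1 [s] w' t' a * (τ t).1 w' t' b' * G.δ t' a b' u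
            * safeW G (shiftStrat σ₁.1 [s]) (τ t).1 F n (w' ++ [t']) u else 0)
      have hσ₂eq : σ₂ (s :: w') t' = (τ t).1 w' t' := by
        match w' with
        | [] =>
          simp only [List.nil_append, List.head?_cons, Option.some.injEq] at hh
          subst hh; rfl
        | u :: w'' =>
          simp only [List.cons_append, List.head?_cons, Option.some.injEq] at hh
          subst hh; rfl
      have hσ₁eq : σ₁.1 (s :: w') t' = shiftStrat σ₁.1 [s] w' t' := rfl
      have hrec : ∀ u : S, safeW G σ₁.1 σ₂ F n ((s :: w') ++ [t']) u
          = safeW G (shiftStrat σ₁.1 [s]) (τ t).1 F n ((w' ++ [t'])) u := by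
        intro u
        have : ((s :: w') ++ [t']) = s :: (w' ++ [t']) := rfl
        rw [this]
        exact ih t (w' ++ [t']) u (head?_append_append hh)
      simp only [hσ₂eq, hσ₁eq, hrec]
  -- expansion of safeW under σ₂ at the first step
  have key : ∀ n, safeW G σ₁.1 σ₂ F (n + 1) [] s
      = ∑ a : M, ∑ b' : M, ∑ t : S, x a * pureDist b b' * G.δ s a b' t
          * safeW G (shiftStrat σ₁.1 [s]) (τ t).1 F n [] t := by
    intro n
    show (if s ∈ F then ∑ a : M, ∑ b' : M, ∑ t : S,
        σ₁.1 [] s a * σ₂ [] s b' * G.δ s a b' t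
          * safeW G σ₁.1 σ₂ F n ([] ++ [s]) t else 0) = _
    rw [if_pos hsF]
    have hσ₂0 : σ₂ [] s = pureDist b := by
      show (if s = s then pureDist b else unif2 G s) = pureDist b
      rw [if_pos rfl]
    refine Finset.sum_congr rfl fun a _ => Finset.sum_congr rfl fun b' _ =>
      Finset.sum_congr rfl fun t _ => ?_
    have : safeW G σ₁.1 σ₂ F n ([] ++ [s]) t
        = safeW G (shiftStrat σ₁.1 [s]) (τ t).1 F n [] t := by
      show safeW G σ₁.1 σ₂ F n (s :: []) t = _
      exact claim n t [] t (by simp)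
    rw [this, hσ₂0]
  -- take limits on both sides of `key`
  have hyb : IsDistOn (G.Γ₂ s) (pureDist b) := isDistOn_pureDist hb
  have hlim1 : Filter.Tendsto (fun n => safeW G σ₁.1 σ₂ F (n + 1) [] s)
      Filter.atTop (nhds (prSafe G σ₁.1 σ₂ F s)) :=
    (safeW_tendsto hG σ₁.2 hσ₂ [] s).comp (Filter.tendsto_add_atTop_nat 1)
  have hlim2 : Filter.Tendsto (fun n => ∑ a : M, ∑ b' : M, ∑ t : S,
      x a * pureDist b b' * G.δ s a b' t
        * safeW G (shiftStrat σ₁.1 [s]) (τ t).1 F n [] t) Filter.atTop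
      (nhds (∑ a : M, ∑ b' : M, ∑ t : S, x a * pureDist b b' * G.δ s a b' t
        * prSafe G (shiftStrat σ₁.1 [s]) (τ t).1 F t)) := by
    refine tendsto_finset_sum _ fun a _ => tendsto_finset_sum _ fun b' _ =>
      tendsto_finset_sum _ fun t _ => ?_
    exact (safeW_tendsto hG hshift (τ t).2 [] t).const_mul _
  have heq : prSafe G σ₁.1 σ₂ F s
      = ∑ a : M, ∑ b' : M, ∑ t : S, x a * pureDist b b' * G.δ s a b' t
        * prSafe G (shiftStrat σ₁.1 [s]) (τ t).1 F t := by
    refine tendsto_nhds_unique hlim1 ?_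
    have : (fun n => safeW G σ₁.1 σ₂ F (n + 1) [] s)
        = fun n => ∑ a : M, ∑ b' : M, ∑ t : S, x a * pureDist b b' * G.δ s a b' t
          * safeW G (shiftStrat σ₁.1 [s]) (τ t).1 F n [] t := funext key
    rw [this]; exact hlim2
  -- put everything together
  have hstep1 : valSafeUnder G σ₁.1 F s ≤ prSafe G σ₁.1 σ₂ F s :=
    ciInf_le (valSafeUnder_bddBelow hG σ₁.2 s) ⟨σ₂, hσ₂⟩
  have hstep2 : prSafe G σ₁.1 σ₂ F s ≤ gfun G v s x b + ε := by
    rw [heq]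
    calc (∑ a : M, ∑ b' : M, ∑ t : S, x a * pureDist b b' * G.δ s a b' t
          * prSafe G (shiftStrat σ₁.1 [s]) (τ t).1 F t)
        ≤ ∑ a : M, ∑ b' : M, ∑ t : S, x a * pureDist b b' * G.δ s a b' t * (v t + ε) :=
          sum3_mono G hG hx.1 hyb.1 fun t => le_of_lt (hτ t)
      _ = (∑ a : M, ∑ b' : M, ∑ t : S, x a * pureDist b b' * G.δ s a b' t * v t) + ε :=
          sum3_add_const hG hx hyb v ε
      _ = preSS G v s x (pureDist b) + ε := by rw [preSS_reorder]
      _ = gfun G v s x b + ε := by rw [preSS_pure]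
  exact le_trans hstep1 hstep2

end CGame
end Dev

/-- **Memoryless optimal strategies for concurrent safety games.**
For every concurrent game structure `G` with safe set `F`, there is a player-1
selector `ξ` whose induced memoryless strategy is optimal: for every state `s`,
`inf_{σ₂} Pr_s^{ml ξ, σ₂}(Safe F) = ⟨1⟩val(Safe F)(s)`. -/
theorem memoryless_optimal_safe
    {S M : Type} [Fintype S] [DecidableEq S] [Fintype M] [DecidableEq M]
    (G : CGame S M) (hG : G.IsGame) (F : Set S) :
    ∃ ξ : S → M → ℝ, CGame.IsSel1 G ξ ∧
      ∀ s : S, CGame.valSafeUnder G (CGame.ml ξ) F s = CGame.valSafe G F s := by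
  classical
  have hv0 : ∀ t, 0 ≤ CGame.valSafe G F t := fun t => CGame.valSafe_nonneg hG t
  have hv1 : ∀ t, CGame.valSafe G F t ≤ 1 := fun t => CGame.valSafe_le_one hG t
  choose ξ hξ1 hξ2 using fun s : S =>
    CGame.pre1_attained (v := CGame.valSafe G F) hG hv0 hv1 s
  have hsel : CGame.IsSel1 G ξ := hξ1
  have hstrat : CGame.IsStrat1 G (CGame.ml ξ) := fun _ s => hξ1 s
  refine ⟨ξ, hsel, fun s => ?_⟩
  haveI := CGame.nonempty_strat2 G hG
  refine le_antisymm
    (le_ciSup (CGame.valSafe_bddAbove hG s) (⟨CGame.ml ξ, hstrat⟩ : {σ // CGame.IsStrat1 G σ})) ?_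
  -- valSafe ≤ valSafeUnder (ml ξ)
  refine le_ciInf fun σ₂ => ?_
  -- valSafe s ≤ prSafe G (ml ξ) σ₂ F s
  have hmain : ∀ n (w : List S) (t : S),
      CGame.valSafe G F t ≤ CGame.safeW G (CGame.ml ξ) σ₂.1 F n w t := by
    intro n
    induction n with
    | zero =>
      intro w t
      show CGame.valSafe G F t ≤ if t ∈ F then 1 else 0
      split
      · exact hv1 t
      · next h => exact le_of_eq (CGame.valSafe_of_not_mem hG h)
    | succ n ih =>
      intro w t
      show CGame.valSafe G F t ≤ if t ∈ F then ∑ a : M, ∑ b : M, ∑ u : S,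
          CGame.ml ξ w t a * σ₂.1 w t b * G.δ t a b u
            * CGame.safeW G (CGame.ml ξ) σ₂.1 F n (w ++ [t]) u else 0
      split
      · next htF =>
        calc CGame.valSafe G F t ≤ CGame.pre1 G (CGame.valSafe G F) t :=
              CGame.valSafe_le_pre1 hG F t
          _ = CGame.pre1Sel G (CGame.valSafe G F) t (ξ t) := (hξ2 t).symm
          _ ≤ CGame.preSS G (CGame.valSafe G F) t (ξ t) (σ₂.1 w t) :=
              CGame.pre1Sel_le_preSS hG (σ₂.2 w t)
          _ = ∑ a : M, ∑ b : M, ∑ u : S,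
              ξ t a * σ₂.1 w t b * G.δ t a b u * CGame.valSafe G F u :=
              CGame.preSS_reorder
          _ ≤ ∑ a : M, ∑ b : M, ∑ u : S,
              ξ t a * σ₂.1 w t b * G.δ t a b u
                * CGame.safeW G (CGame.ml ξ) σ₂.1 F n (w ++ [t]) u :=
              CGame.sum3_mono G hG (hξ1 t).1 (σ₂.2 w t).1 fun u => ih (w ++ [t]) u
          _ = _ := rfl
      · next h => exact le_of_eq (CGame.valSafe_of_not_mem hG h)
  exact le_ciInf fun n => hmain n [] s
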